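/- Dirac's condition holds in the measure algebra: if $|\sigma(f,g)| \le c\,\varsigma(f)\varsigma(g)$ and $\mu, \nu$ have finite first $\varsigma$-moments, then $\lim_{\hbar \to 0} \|\{\mu,\nu\}_\hbar - \{\mu,\nu\}_0\|_1 = 0$, where $\{\mu,\nu\}_\hbar := \frac{i}{\hbar}(\mu\star_\hbar\nu - \nu\star_\hbar\mu)$ for $\hbar \ne 0$ and $\{\mu,\nu\}_0(\Lambda) = \int\int \sigma(f,g)\mathbf{1}_\Lambda(f+g)\,d\mu(f)\,d\nu(g)$. -/

import Mathlib

open MeasureTheory Complex Filter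

/-- A finite complex Borel measure, represented by its variation measure
together with a density of modulus one (polar decomposition). -/
structure CMeasure (E : Type*) [MeasurableSpace E] where
  var : MeasureTheory.Measure E
  finite : MeasureTheory.IsFiniteMeasure var
  density : E → ℂ
  meas_density : Measurable density
  norm_density : ∀ f, ‖density f‖ = 1

namespace CMeasure

/-- The value `μ(Λ)` of the complex measure on a set `Λ`. -/
noncomputable def val {E : Type*} [MeasurableSpace E] (μ : CMeasure E) (Λ : Set E) : ℂ :=
  ∫ f in Λ, μ.density f ∂μ.var

/-- The integral `∫ a dμ` of a complex function against the complex measure. -/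
noncomputable def integral {E : Type*} [MeasurableSpace E] (μ : CMeasure E) (a : E → ℂ) : ℂ :=
  ∫ f, a f * μ.density f ∂μ.var

/-- The total variation norm `‖μ‖₁ = |μ|(E)`. -/
noncomputable def norm1 {E : Type*} [MeasurableSpace E] (μ : CMeasure E) : ℝ :=
  (μ.var Set.univ).toReal

end CMeasure

/-- The set of partial sums `∑ ‖φ(Λ_k)‖` over finite disjoint families of
measurable sets, whose supremum is the total variation norm of the set function `φ`. -/
def tvSet {E : Type*} [MeasurableSpace E] (φ : Set E → ℂ) : Set ℝ :=
  { r | ∃ (n : ℕ) (Λ : Fin n → Set E), (∀ i, MeasurableSet (Λ i)) ∧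
      Pairwise (Function.onFun Disjoint Λ) ∧ r = ∑ i, ‖φ (Λ i)‖ }

/-- The total variation norm of a complex set function. -/
noncomputable def tvNorm {E : Type*} [MeasurableSpace E] (φ : Set E → ℂ) : ℝ :=
  sSup (tvSet φ)

/-- Complex-valued indicator function of a set. -/
noncomputable def cind {E : Type*} (Λ : Set E) (h : E) : ℂ :=
  Set.indicator Λ (fun _ => (1 : ℂ)) h

/-- Twisted convolution `(μ ⋆_hb ν)(Λ) = ∫∫ e^{-(i/2)hbσ(f,g)} 1_Λ(f+g) dμ(f) dν(g)`,
as a set function. -/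
noncomputable def twistVal {E : Type*} [MeasurableSpace E] [Add E]
    (σ : E → E → ℝ) (hb : ℝ) (μ ν : CMeasure E) (Λ : Set E) : ℂ :=
  μ.integral fun f => ν.integral fun g =>
    Complex.exp (-(Complex.I / 2) * (hb : ℂ) * (σ f g : ℂ)) * cind Λ (f + g)

/-- Poisson bracket `{μ,ν}₀(Λ) = ∫∫ σ(f,g) 1_Λ(f+g) dμ(f) dν(g)`, as a set function. -/
noncomputable def pbVal {E : Type*} [MeasurableSpace E] [Add E]
    (σ : E → E → ℝ) (μ ν : CMeasure E) (Λ : Set E) : ℂ :=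
  μ.integral fun f => ν.integral fun g => ((σ f g : ℝ) : ℂ) * cind Λ (f + g)

/-! Writing both twisted products and the Poisson bracket as integrals against `|μ| ⊗ |ν|` (with
the unimodular densities), antisymmetry of `σ` turns `{μ,ν}_ħ - {μ,ν}₀` into the push-forward
under `(f, g) ↦ f + g` of the density `k_ħ(σ(f,g))`, where `k_ħ(x) = (2/ħ) sin(ħx/2) - x`.
Its total variation is therefore at most `∫ |k_ħ(σ)| d(|μ| ⊗ |ν|)`. Since `|k_ħ(x)| ≤ 2|x|`,
`σ` is integrable by the bound `|σ(f,g)| ≤ c ς(f) ς(g)`, and `k_ħ → 0` pointwise, dominated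
convergence finishes the proof. -/

attribute [local instance] CMeasure.finite

/-- `(2/ħ) sin(ħx/2) - x` for `ħ ≠ 0`, written through `sinc` so that it is continuous at
`ħ = 0`. -/
noncomputable def moyalDefect (ħ x : ℝ) : ℝ := x * (Real.sinc (ħ * x / 2) - 1)

lemma continuous_moyalDefect : Continuous (Function.uncurry moyalDefect) := by
  unfold moyalDefect
  exact continuous_snd.mul
    ((Real.continuous_sinc.comp ((continuous_fst.mul continuous_snd).div_const 2)).sub
      continuous_const)

lemma continuous_moyalDefect_left (x : ℝ) : Continuous fun ħ => moyalDefect ħ x :=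
  continuous_moyalDefect.comp (Continuous.prodMk_left x)

lemma continuous_moyalDefect_right (ħ : ℝ) : Continuous (moyalDefect ħ) :=
  continuous_moyalDefect.comp (Continuous.prodMk_right ħ)

lemma moyalDefect_zero_left (x : ℝ) : moyalDefect 0 x = 0 := by
  simp [moyalDefect, Real.sinc_zero]

lemma abs_moyalDefect_le (ħ x : ℝ) : |moyalDefect ħ x| ≤ 2 * |x| := by
  have hsinc : |Real.sinc (ħ * x / 2) - 1| ≤ 2 := abs_sub_le_iff.2
    ⟨by linarith [Real.sinc_le_one (ħ * x / 2)], by linarith [Real.neg_one_le_sinc (ħ * x / 2)]⟩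
  rw [moyalDefect, abs_mul, mul_comm]
  exact mul_le_mul_of_nonneg_right hsinc (abs_nonneg x)

lemma I_div_mul_exp_sub_exp_sub_eq_moyalDefect {ħ : ℝ} (hħ : ħ ≠ 0) (x : ℝ) :
    I / ħ * (exp (-(I / 2) * ħ * x) - exp (-(I / 2) * ħ * (-x : ℝ))) - x = moyalDefect ħ x := by
  rcases eq_or_ne x 0 with rfl | hx
  · simp [moyalDefect]
  have hsin : exp (-(I / 2) * ħ * x) - exp (-(I / 2) * ħ * (-x : ℝ)) =
      -2 * I * Complex.sin (ħ * x / 2) := by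
    rw [Complex.sin]
    push_cast
    ring_nf
    rw [Complex.I_sq]
    ring_nf
  have hx' : (x : ℂ) ≠ 0 := by exact_mod_cast hx
  rw [hsin, moyalDefect, Real.sinc_of_ne_zero (by positivity)]
  push_cast
  field_simp
  ring_nf
  rw [Complex.I_sq]
  ring

lemma MeasureTheory.Integrable.moyalDefect {X : Type*} [MeasurableSpace X]
    {ρ : Measure X} {s : X → ℝ} (hs : Integrable s ρ) (ħ : ℝ) :
    Integrable (fun x => moyalDefect ħ (s x)) ρ :=
  (hs.abs.const_mul 2).mono'
    ((continuous_moyalDefect_right ħ).comp_aestronglyMeasurable hs.1)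
    (ae_of_all _ fun x => abs_moyalDefect_le ħ (s x))

lemma tendsto_integral_abs_moyalDefect {X : Type*} [MeasurableSpace X] {ρ : Measure X}
    {s : X → ℝ} (hs : Integrable s ρ) :
    Tendsto (fun ħ => ∫ x, |moyalDefect ħ (s x)| ∂ρ) (nhds 0) (nhds 0) := by
  have hlim := tendsto_integral_filter_of_dominated_convergence (fun x => 2 * |s x|)
    (F := fun ħ x => |moyalDefect ħ (s x)|)
    (Eventually.of_forall fun ħ =>
      ((continuous_moyalDefect_right ħ).comp_aestronglyMeasurable hs.1).norm)
    (Eventually.of_forall fun ħ => ae_of_all _ fun x => by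
      simpa only [Real.norm_eq_abs, abs_abs] using abs_moyalDefect_le ħ (s x))
    (hs.abs.const_mul 2)
    (ae_of_all _ fun x => by
      simpa [moyalDefect_zero_left] using ((continuous_moyalDefect_left (s x)).tendsto 0).abs)
  simpa only [Real.norm_eq_abs, integral_zero] using hlim

section TotalVariation

variable {E : Type*} [MeasurableSpace E]

lemma zero_mem_tvSet (φ : Set E → ℂ) : (0 : ℝ) ∈ tvSet φ :=
  ⟨0, Fin.elim0, fun i => i.elim0, fun i => i.elim0, by simp⟩

lemma tvNorm_nonneg (φ : Set E → ℂ) : 0 ≤ tvNorm φ :=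
  Real.sSup_nonneg <| by rintro _ ⟨n, Λ, -, -, rfl⟩; positivity

lemma tvNorm_congr {φ ψ : Set E → ℂ} (h : ∀ Λ, MeasurableSet Λ → φ Λ = ψ Λ) :
    tvNorm φ = tvNorm ψ := by
  unfold tvNorm tvSet
  congr 1
  ext r
  refine exists_congr fun n => exists_congr fun Λ => and_congr_right fun hΛ => ?_
  simp only [h _ (hΛ _)]

lemma tvNorm_le_of_forall_sum_le {φ : Set E → ℂ} {B : ℝ}
    (hB : ∀ (n : ℕ) (Λ : Fin n → Set E), (∀ i, MeasurableSet (Λ i)) →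
      Pairwise (Function.onFun Disjoint Λ) → ∑ i, ‖φ (Λ i)‖ ≤ B) :
    tvNorm φ ≤ B :=
  csSup_le ⟨0, zero_mem_tvSet φ⟩ <| by rintro _ ⟨n, Λ, hΛ, hdisj, rfl⟩; exact hB n Λ hΛ hdisj

lemma tvNorm_setIntegral_preimage_le {X : Type*} [MeasurableSpace X] {ρ : Measure X}
    {T : X → E} (hT : Measurable T) {F : X → ℂ} (hF : Integrable F ρ) :
    tvNorm (fun Λ => ∫ x in T ⁻¹' Λ, F x ∂ρ) ≤ ∫ x, ‖F x‖ ∂ρ := by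
  refine tvNorm_le_of_forall_sum_le fun n Λ hΛ hdisj => ?_
  have hΛ' (i : Fin n) : MeasurableSet (T ⁻¹' Λ i) := hT (hΛ i)
  calc ∑ i, ‖∫ x in T ⁻¹' Λ i, F x ∂ρ‖
      ≤ ∑ i, ∫ x in T ⁻¹' Λ i, ‖F x‖ ∂ρ :=
        Finset.sum_le_sum fun i _ => norm_integral_le_integral_norm _
    _ = ∫ x in ⋃ i, T ⁻¹' Λ i, ‖F x‖ ∂ρ :=
        (integral_iUnion_fintype hΛ' (fun i j hij => (hdisj hij).preimage T)
          fun i => hF.norm.integrableOn).symm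
    _ ≤ ∫ x, ‖F x‖ ∂ρ := setIntegral_le_integral hF.norm (ae_of_all _ fun x => norm_nonneg _)

end TotalVariation

namespace CMeasure

variable {E : Type*} [MeasurableSpace E] (μ ν : CMeasure E)

lemma integrable_mul_densities {F : E × E → ℂ} (hF : Integrable F (μ.var.prod ν.var)) :
    Integrable (fun p => F p * ν.density p.2 * μ.density p.1) (μ.var.prod ν.var) :=
  (hF.mul_bdd (ν.meas_density.comp measurable_snd).aestronglyMeasurable
      (ae_of_all _ fun _ => (ν.norm_density _).le)).mul_bdd
    (μ.meas_density.comp measurable_fst).aestronglyMeasurable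
    (ae_of_all _ fun _ => (μ.norm_density _).le)

lemma integral_integral_eq_integral_prod {K : E → E → ℂ}
    (hK : Integrable (fun p : E × E => K p.1 p.2) (μ.var.prod ν.var)) :
    μ.integral (fun f => ν.integral (K f)) =
      ∫ p, K p.1 p.2 * ν.density p.2 * μ.density p.1 ∂(μ.var.prod ν.var) := by
  rw [integral_prod _ (μ.integrable_mul_densities ν hK)]
  simp only [CMeasure.integral, ← integral_mul_const]

lemma integral_integral_swap_eq_integral_prod {K : E → E → ℂ}
    (hK : Integrable (fun p : E × E => K p.2 p.1) (μ.var.prod ν.var)) :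
    ν.integral (fun g => μ.integral (K g)) =
      ∫ p, K p.2 p.1 * ν.density p.2 * μ.density p.1 ∂(μ.var.prod ν.var) := by
  rw [integral_integral_eq_integral_prod ν μ hK.swap, ← integral_prod_swap]
  simp only [Prod.fst_swap, Prod.snd_swap, mul_right_comm]

end CMeasure

lemma norm_cind_le_one {E : Type*} (Λ : Set E) (x : E) : ‖cind Λ x‖ ≤ 1 := by
  by_cases h : x ∈ Λ <;> simp [cind, h]

section Bracket

variable {E : Type*} [MeasurableSpace E]

lemma measurable_cind {Λ : Set E} (hΛ : MeasurableSet Λ) : Measurable (cind Λ) :=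
  measurable_const.indicator hΛ

lemma integrable_exp_mul_cind {X : Type*} [MeasurableSpace X] {ρ : Measure X}
    [IsFiniteMeasure ρ] (ħ : ℝ) {s : X → ℝ} {t : X → E} (hs : Measurable s) (ht : Measurable t)
    {Λ : Set E} (hΛ : MeasurableSet Λ) :
    Integrable (fun x => exp (-(I / 2) * ħ * s x) * cind Λ (t x)) ρ := by
  have hind := (measurable_cind hΛ).comp ht
  refine .of_bound (by fun_prop) 1 (ae_of_all _ fun x => ?_)
  simpa [Complex.norm_exp] using norm_cind_le_one Λ (t x)

variable [AddCommMagma E] [MeasurableAdd₂ E] (μ ν : CMeasure E) {σ : E → E → ℝ}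

lemma bracket_sub_pbVal_eq_setIntegral (hσ_anti : ∀ f g, σ f g = -σ g f)
    (hσ_meas : Measurable fun p : E × E => σ p.1 p.2)
    (hσ_int : Integrable (fun p : E × E => σ p.1 p.2) (μ.var.prod ν.var)) {ħ : ℝ} (hħ : ħ ≠ 0)
    {Λ : Set E} (hΛ : MeasurableSet Λ) :
    I / ħ * (twistVal σ ħ μ ν Λ - twistVal σ ħ ν μ Λ) - pbVal σ μ ν Λ =
      ∫ p in (fun p : E × E => p.1 + p.2) ⁻¹' Λ,
        (moyalDefect ħ (σ p.1 p.2) : ℂ) * ν.density p.2 * μ.density p.1 ∂(μ.var.prod ν.var) := by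
  have hG := integrable_exp_mul_cind (ρ := μ.var.prod ν.var) ħ hσ_meas measurable_add hΛ
  have hH : Integrable (fun p : E × E => exp (-(I / 2) * ħ * σ p.2 p.1) * cind Λ (p.2 + p.1))
      (μ.var.prod ν.var) :=
    integrable_exp_mul_cind ħ (hσ_meas.comp measurable_swap) (measurable_snd.add measurable_fst) hΛ
  have hP : Integrable (fun p : E × E => (σ p.1 p.2 : ℂ) * cind Λ (p.1 + p.2))
      (μ.var.prod ν.var) :=
    hσ_int.ofReal.mul_bdd ((measurable_cind hΛ).comp measurable_add).aestronglyMeasurable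
      (ae_of_all _ fun _ => norm_cind_le_one _ _)
  have hG' := μ.integrable_mul_densities ν hG
  have hH' := μ.integrable_mul_densities ν hH
  have hP' := μ.integrable_mul_densities ν hP
  rw [twistVal, twistVal, pbVal, μ.integral_integral_eq_integral_prod ν hG,
    μ.integral_integral_swap_eq_integral_prod ν hH, μ.integral_integral_eq_integral_prod ν hP,
    ← integral_indicator (measurable_add hΛ), ← integral_sub hG' hH', ← integral_const_mul]
  refine (integral_sub ((hG'.sub hH').const_mul _) hP').symm.trans
    (integral_congr_ae <| ae_of_all _ fun p => ?_)
  dsimp only [Pi.sub_apply]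
  rw [hσ_anti p.2 p.1, add_comm p.2 p.1]
  by_cases h : p.1 + p.2 ∈ Λ
  · rw [Set.indicator_of_mem (show p ∈ (fun p : E × E => p.1 + p.2) ⁻¹' Λ from h), cind,
      Set.indicator_of_mem h, ← I_div_mul_exp_sub_exp_sub_eq_moyalDefect hħ]
    ring
  · simp [h, cind]

lemma tvNorm_bracket_sub_pbVal_le (hσ_anti : ∀ f g, σ f g = -σ g f)
    (hσ_meas : Measurable fun p : E × E => σ p.1 p.2)
    (hσ_int : Integrable (fun p : E × E => σ p.1 p.2) (μ.var.prod ν.var)) {ħ : ℝ} (hħ : ħ ≠ 0) :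
    tvNorm (fun Λ => I / ħ * (twistVal σ ħ μ ν Λ - twistVal σ ħ ν μ Λ) - pbVal σ μ ν Λ) ≤
      ∫ p, |moyalDefect ħ (σ p.1 p.2)| ∂(μ.var.prod ν.var) := by
  rw [tvNorm_congr fun Λ hΛ => bracket_sub_pbVal_eq_setIntegral μ ν hσ_anti hσ_meas hσ_int hħ hΛ]
  refine (tvNorm_setIntegral_preimage_le measurable_add
    (μ.integrable_mul_densities ν (hσ_int.moyalDefect ħ).ofReal)).trans_eq
    (integral_congr_ae <| ae_of_all _ fun p => ?_)
  simp [μ.norm_density, ν.norm_density]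

end Bracket

lemma integrable_prod_of_abs_le_mul {X Y : Type*} [MeasurableSpace X] [MeasurableSpace Y]
    {μ : Measure X} {ν : Measure Y} {σ : X → Y → ℝ} {s : X → ℝ} {t : Y → ℝ} {c : ℝ}
    (hσ_meas : AEStronglyMeasurable (fun p : X × Y => σ p.1 p.2) (μ.prod ν))
    (hdom : ∀ f g, |σ f g| ≤ c * s f * t g) (hs : Integrable s μ) (ht : Integrable t ν) :
    Integrable (fun p : X × Y => σ p.1 p.2) (μ.prod ν) :=
  ((hs.mul_prod ht).const_mul c).mono' hσ_meas
    (ae_of_all _ fun p => by simpa only [Real.norm_eq_abs, mul_assoc] using hdom p.1 p.2)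

theorem dirac_condition_measures_general
    {E : Type*} [AddCommGroup E] [Module ℝ E] [MeasurableSpace E] [MeasurableAdd₂ E]
    (σ : E →ₗ[ℝ] E →ₗ[ℝ] ℝ) (hσ_anti : ∀ f g : E, σ f g = - σ g f)
    (hσ_meas : Measurable fun p : E × E => σ p.1 p.2)
    (ς : Seminorm ℝ E)
    (c : ℝ) (hdom : ∀ f g : E, |σ f g| ≤ c * ς f * ς g)
    (μ ν : CMeasure E)
    (hμ : MeasureTheory.Integrable (fun f : E => (ς f : ℝ)) μ.var)
    (hν : MeasureTheory.Integrable (fun g : E => (ς g : ℝ)) ν.var) :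
    Filter.Tendsto (fun hb : ℝ =>
        tvNorm (fun Λ : Set E =>
          (Complex.I / (hb : ℂ)) * (twistVal (fun a b => σ a b) hb μ ν Λ
              - twistVal (fun a b => σ a b) hb ν μ Λ)
            - pbVal (fun a b => σ a b) μ ν Λ))
      (nhdsWithin 0 {(0 : ℝ)}ᶜ) (nhds 0) := by
  have hσ_int : Integrable (fun p : E × E => σ p.1 p.2) (μ.var.prod ν.var) :=
    integrable_prod_of_abs_le_mul hσ_meas.aestronglyMeasurable hdom hμ hν
  refine squeeze_zero' (Eventually.of_forall fun ħ => tvNorm_nonneg _) ?_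
    ((tendsto_integral_abs_moyalDefect hσ_int).mono_left nhdsWithin_le_nhds)
  filter_upwards [self_mem_nhdsWithin] with ħ hħ
  exact tvNorm_bracket_sub_pbVal_le μ ν hσ_anti hσ_meas hσ_int hħ

/-- Dirac's condition in the measure algebra:
`lim_{ħ→0} ‖{μ,ν}_ħ - {μ,ν}₀‖₁ = 0`, where
`{μ,ν}_ħ = (i/ħ)(μ⋆_ħν - ν⋆_ħμ)` for `ħ ≠ 0`. -/
theorem dirac_condition_measures
    {E : Type*} [AddCommGroup E] [Module ℝ E] [MeasurableSpace E] [MeasurableAdd₂ E]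
    (σ : E →ₗ[ℝ] E →ₗ[ℝ] ℝ) (hσ_anti : ∀ f g : E, σ f g = - σ g f)
    (hσ_meas : Measurable fun p : E × E => σ p.1 p.2)
    (ς : Seminorm ℝ E) (hς_meas : Measurable fun f : E => (ς f : ℝ))
    (c : ℝ) (hc : 0 < c) (hdom : ∀ f g : E, |σ f g| ≤ c * ς f * ς g)
    (μ ν : CMeasure E)
    (hμ : MeasureTheory.Integrable (fun f : E => (ς f : ℝ)) μ.var)
    (hν : MeasureTheory.Integrable (fun g : E => (ς g : ℝ)) ν.var) :
    Filter.Tendsto (fun hb : ℝ =>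
        tvNorm (fun Λ : Set E =>
          (Complex.I / (hb : ℂ)) * (twistVal (fun a b => σ a b) hb μ ν Λ
              - twistVal (fun a b => σ a b) hb ν μ Λ)
            - pbVal (fun a b => σ a b) μ ν Λ))
      (nhdsWithin 0 {(0 : ℝ)}ᶜ) (nhds 0) :=
  dirac_condition_measures_general σ hσ_anti hσ_meas ς c hdom μ ν hμ hν
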